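/- arXiv:1705.08218 — 2 statements merged into one kernel-verified Lean document; each statement's English description precedes it below -/
import Mathlib

section
/- Correctness of the compact single-sample flow encoding: for a fixed set F of open edges, there exist z : V∖{s} → {0,1} and a nonnegative flow x with net outflow Σ_{k≠s} z_k at s, net inflow z_r at each r ≠ s, x supported on F, and 0 ≤ x_e ≤ |V|−1, such that z_k = 1 for every k reachable from s via F, if and only if z is the indicator of reachability restricted to the reachable set; moreover the maximum of Σ_{k≠s} w(k) z_k over all feasible (z, x) (with w ≥ 0) equals Σ_{k reachable from s via F, k≠s} w(k). -/
open Finset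
open scoped Classical

/-!
For every feasible `(z, x)`, `z` vanishes on the set `U` of vertices that cannot be reached from
`s` through open edges: there the conservation constraints give
`∑_{k ∈ U} z_k = inflow(U) - outflow(U)`, and an open edge carrying flow into `U` starts in `U`
itself, so the inflow is at most the outflow, while `z ≥ 0`. Conversely, routing one unit along a
simple open path from `s` to each reachable vertex gives a flow with `z` the reachability
indicator; each such path uses an edge at most once, so an edge carries at most the number of
reachable vertices other than `s`, i.e. at most `|V| - 1`. With `w ≥ 0` and `z ≤ 1`, the indicator
is therefore optimal.
-/

namespace List

theorem exists_isChain_cons_nodup_of_relationReflTransGen {α : Type*} {r : α → α → Prop}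
    {a b : α} (h : Relation.ReflTransGen r a b) :
    ∃ l, IsChain r (a :: l) ∧ (a :: l).Nodup ∧ (a :: l).getLast (cons_ne_nil a l) = b := by
  induction h using Relation.ReflTransGen.head_induction_on with
  | refl => exact ⟨[], .singleton _, nodup_singleton _, rfl⟩
  | @head a c hac _ ih =>
    obtain ⟨l, hchain, hnodup, hlast⟩ := ih
    by_cases ha : a ∈ c :: l
    · obtain ⟨p, l', hsplit⟩ := append_of_mem ha
      have hsuffix : a :: l' <:+ c :: l := ⟨p, hsplit.symm⟩
      refine ⟨l', hchain.suffix hsuffix, hnodup.sublist hsuffix.sublist, ?_⟩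
      simp_all [getLast_append_of_ne_nil]
    · exact ⟨c :: l, hchain.cons_cons hac, nodup_cons.2 ⟨ha, hnodup⟩, by rwa [getLast_cons_cons]⟩

end List

namespace FlowNetwork

variable {V E : Type*} [Fintype E] (src dst : E → V)

noncomputable def netOutflow (x : E → ℝ) (v : V) : ℝ :=
  (∑ e with src e = v, x e) - ∑ e with dst e = v, x e

def Adj (F : Set E) (u v : V) : Prop :=
  ∃ e, e ∈ F ∧ src e = u ∧ dst e = v

variable {src dst}

lemma netOutflow_add (x y : E → ℝ) (v : V) :
    netOutflow src dst (x + y) v = netOutflow src dst x v + netOutflow src dst y v := by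
  simp only [netOutflow, Pi.add_apply, sum_add_distrib]
  ring

lemma netOutflow_sum {ι : Type*} (T : Finset ι) (x : ι → E → ℝ) (v : V) :
    netOutflow src dst (∑ k ∈ T, x k) v = ∑ k ∈ T, netOutflow src dst (x k) v := by
  simp only [netOutflow, Finset.sum_apply, sum_sub_distrib]
  rw [sum_comm, sum_comm (s := univ.filter fun e => dst e = v)]

lemma netOutflow_single (e₀ : E) (v : V) :
    netOutflow src dst (Pi.single e₀ 1) v =
      (if v = src e₀ then 1 else 0) - (if v = dst e₀ then 1 else 0) := by
  simp [netOutflow, Pi.single_apply, eq_comm]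

lemma exists_unitFlow_of_isChain {F : Set E} {a : V} {l : List V}
    (hchain : (a :: l).IsChain (Adj src dst F)) (hnodup : (a :: l).Nodup) :
    ∃ y : E → ℝ, (∀ e, 0 ≤ y e ∧ y e ≤ 1) ∧ (∀ e, y e ≠ 0 → e ∈ F ∧ src e ∈ a :: l) ∧
      ∀ v, netOutflow src dst y v = (if v = a then 1 else 0) -
        (if v = (a :: l).getLast (List.cons_ne_nil a l) then 1 else 0) := by
  induction l generalizing a with
  | nil => exact ⟨0, by simp, by simp, fun v => by rw [List.getLast_singleton]; simp [netOutflow]⟩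
  | cons c l ih =>
    obtain ⟨⟨e₀, he₀F, rfl, rfl⟩, htail⟩ := List.isChain_cons_cons.1 hchain
    obtain ⟨hsrc, htail_nodup⟩ := List.nodup_cons.1 hnodup
    obtain ⟨y, hy01, hysupp, hynet⟩ := ih htail htail_nodup
    -- the path is simple, so `e₀` carries no flow yet and adding it keeps the flow `≤ 1`
    have hye₀ : y e₀ = 0 := by_contra fun h => hsrc (hysupp e₀ h).2
    refine ⟨y + Pi.single e₀ 1, fun e => ?_, fun e he => ?_, fun v => ?_⟩
    · by_cases h : e = e₀
      · simp [h, hye₀]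
      · simpa [h] using hy01 e
    · by_cases h : e = e₀
      · simp [h, he₀F]
      · have hye : y e ≠ 0 := by simpa [h] using he
        exact ⟨(hysupp e hye).1, List.mem_cons_of_mem _ (hysupp e hye).2⟩
    · rw [netOutflow_add, hynet, netOutflow_single, List.getLast_cons_cons]
      ring

lemma exists_unitFlow {F : Set E} {a b : V} (h : Relation.ReflTransGen (Adj src dst F) a b) :
    ∃ y : E → ℝ, (∀ e, 0 ≤ y e ∧ y e ≤ 1) ∧ (∀ e, e ∉ F → y e = 0) ∧
      ∀ v, netOutflow src dst y v = (if v = a then 1 else 0) - (if v = b then 1 else 0) := by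
  obtain ⟨l, hchain, hnodup, rfl⟩ := List.exists_isChain_cons_nodup_of_relationReflTransGen h
  obtain ⟨y, hy01, hysupp, hynet⟩ := exists_unitFlow_of_isChain hchain hnodup
  exact ⟨y, hy01, fun e he => by_contra fun h => he (hysupp e h).1, hynet⟩

lemma exists_flow_of_forall_reach {F : Set E} {s : V} (T : Finset V)
    (hT : ∀ k ∈ T, Relation.ReflTransGen (Adj src dst F) s k) :
    ∃ x : E → ℝ, (∀ e, 0 ≤ x e ∧ x e ≤ #T) ∧ (∀ e, e ∉ F → x e = 0) ∧
      ∀ v, netOutflow src dst x v = (if v = s then (#T : ℝ) else 0) - (if v ∈ T then 1 else 0) := by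
  choose! y hy01 hyF hynet using fun k hk => exists_unitFlow (hT k hk)
  refine ⟨∑ k ∈ T, y k, fun e => ⟨?_, ?_⟩, fun e he => ?_, fun v => ?_⟩
  · simpa using sum_nonneg fun k hk => (hy01 k hk e).1
  · simpa using sum_le_card_nsmul T (y · e) 1 fun k hk => (hy01 k hk e).2
  · simpa using sum_eq_zero fun k hk => hyF k hk e he
  · rw [netOutflow_sum, sum_congr rfl fun k hk => hynet k hk v, sum_sub_distrib, sum_const,
      sum_ite_eq]
    split_ifs <;> simp

lemma sum_netOutflow_nonneg {x : E → ℝ} (hx : ∀ e, 0 ≤ x e) {U : Finset V}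
    (hU : ∀ e, x e ≠ 0 → dst e ∈ U → src e ∈ U) : 0 ≤ ∑ v ∈ U, netOutflow src dst x v := by
  have hin : ∑ e with dst e ∈ U, x e ≤ ∑ e with src e ∈ U, x e := by
    rw [← sum_filter_ne_zero]
    exact sum_le_sum_of_subset_of_nonneg (fun e he => by simp_all) fun e _ _ => hx e
  simp only [netOutflow, sum_sub_distrib]
  rw [sum_fiberwise_eq_sum_filter univ U src x, sum_fiberwise_eq_sum_filter univ U dst x]
  linarith

lemma sum_netOutflow_not_reach_nonneg [Fintype V] {F : Set E} {s : V} {x : E → ℝ}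
    (hx : ∀ e, 0 ≤ x e) (hxF : ∀ e, e ∉ F → x e = 0) :
    0 ≤ ∑ v with ¬Relation.ReflTransGen (Adj src dst F) s v, netOutflow src dst x v := by
  refine sum_netOutflow_nonneg hx fun e hxe hdst => ?_
  simp only [mem_filter, mem_univ, true_and] at hdst ⊢
  exact fun hsrc => hdst (hsrc.tail ⟨e, by_contra fun h => hxe (hxF e h), rfl, rfl⟩)

section Feasibility

variable [Fintype V] (src dst) (F : Set E) (s : V)

def IsFeasible (z : V → ℝ) (x : E → ℝ) : Prop :=
  (∀ v, v ≠ s → 0 ≤ z v ∧ z v ≤ 1) ∧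
  (∀ e, 0 ≤ x e) ∧ (∀ e, e ∉ F → x e = 0) ∧
  (∀ e, x e ≤ (Fintype.card V : ℝ) - 1) ∧
  ((∑ e with src e = s, x e) - (∑ e with dst e = s, x e) = ∑ v with v ≠ s, z v) ∧
  (∀ r, r ≠ s → (∑ e with dst e = r, x e) - (∑ e with src e = r, x e) = z r)

variable {src dst F s}

lemma IsFeasible.eq_zero_of_not_reach {z : V → ℝ} {x : E → ℝ} (h : IsFeasible src dst F s z x)
    {k : V} (hk : ¬Relation.ReflTransGen (Adj src dst F) s k) : z k = 0 := by
  obtain ⟨hz, hx, hxF, -, -, hcons⟩ := h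
  set U : Finset V := {v | ¬Relation.ReflTransGen (Adj src dst F) s v}
  have hUs : ∀ v ∈ U, v ≠ s := fun v hv h => (mem_filter.1 hv).2 (h ▸ .refl)
  have hzU : ∀ v ∈ U, 0 ≤ z v := fun v hv => (hz v (hUs v hv)).1
  have hsum : ∑ v ∈ U, z v = -∑ v ∈ U, netOutflow src dst x v := by
    rw [← sum_neg_distrib]
    refine sum_congr rfl fun v hv => ?_
    rw [← hcons v (hUs v hv), netOutflow, neg_sub]
  have hnonneg : 0 ≤ ∑ v ∈ U, netOutflow src dst x v := sum_netOutflow_not_reach_nonneg hx hxF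
  exact (sum_eq_zero_iff_of_nonneg hzU).1 (le_antisymm (by linarith) (sum_nonneg hzU)) k
    (by simpa [U] using hk)

lemma IsFeasible.sum_mul_le {z : V → ℝ} {x : E → ℝ} (h : IsFeasible src dst F s z x)
    {w : V → ℝ} (hw : ∀ v, 0 ≤ w v) :
    ∑ v with v ≠ s, w v * z v ≤
      ∑ v with v ≠ s ∧ Relation.ReflTransGen (Adj src dst F) s v, w v := by
  calc ∑ v with v ≠ s, w v * z v
      ≤ ∑ v with v ≠ s, if Relation.ReflTransGen (Adj src dst F) s v then w v else 0 := by
        refine sum_le_sum fun v hv => ?_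
        split_ifs with hr
        · exact mul_le_of_le_one_right (hw v) (h.1 v (mem_filter.1 hv).2).2
        · rw [h.eq_zero_of_not_reach hr, mul_zero]
    _ = _ := by rw [← sum_filter, filter_filter]

variable (src dst F s)

lemma exists_isFeasible_reach_indicator :
    ∃ x, IsFeasible src dst F s
      (fun v => if Relation.ReflTransGen (Adj src dst F) s v then 1 else 0) x := by
  set T : Finset V := {v | v ≠ s ∧ Relation.ReflTransGen (Adj src dst F) s v}
  obtain ⟨x, hx, hxF, hnet⟩ := exists_flow_of_forall_reach T fun k hk => (mem_filter.1 hk).2.2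
  have hsT : s ∉ T := by simp [T]
  have hcard : (#T : ℝ) ≤ Fintype.card V - 1 := by
    have : (#T : ℝ) + 1 ≤ Fintype.card V := by exact_mod_cast card_lt_univ_of_notMem hsT
    linarith
  refine ⟨x, fun v _ => by dsimp only; split_ifs <;> norm_num, fun e => (hx e).1, hxF,
    fun e => (hx e).2.trans hcard, ?_, fun r hr => ?_⟩
  · have := hnet s
    rw [if_pos rfl, if_neg hsT, sub_zero] at this
    rw [sum_boole, filter_filter]
    exact this
  · have hrT : r ∈ T ↔ Relation.ReflTransGen (Adj src dst F) s r := by simp [T, hr]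
    have := hnet r
    rw [if_neg hr, zero_sub, netOutflow, ← neg_sub, neg_inj] at this
    rw [this]
    exact if_congr hrT rfl rfl

end Feasibility

end FlowNetwork

theorem stmt9 {V E : Type} [Fintype V] [Fintype E]
    (src dst : E → V) (F : Set E) (s : V) (w : V → ℝ) (hw : ∀ v, 0 ≤ w v) :
    let ReachF : V → Prop := fun k =>
      Relation.ReflTransGen (fun u v => ∃ e, e ∈ F ∧ src e = u ∧ dst e = v) s k
    let Feas : (V → ℝ) → (E → ℝ) → Prop := fun z x =>
      (∀ v, v ≠ s → 0 ≤ z v ∧ z v ≤ 1) ∧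
      (∀ e, 0 ≤ x e) ∧ (∀ e, e ∉ F → x e = 0) ∧
      (∀ e, x e ≤ (Fintype.card V : ℝ) - 1) ∧
      ((∑ e with src e = s, x e) - (∑ e with dst e = s, x e) = ∑ v with v ≠ s, z v) ∧
      (∀ r, r ≠ s → (∑ e with dst e = r, x e) - (∑ e with src e = r, x e) = z r)
    -- (z, x) is feasible with z = 1 on the reachable set iff z is the reachability indicator
    (∀ z : V → ℝ,
      ((∃ x, Feas z x ∧ ∀ k, k ≠ s → ReachF k → z k = 1) ↔
        ((∃ x, Feas z x) ∧ ∀ k, k ≠ s → z k = if ReachF k then 1 else 0))) ∧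
    -- the maximum of the weighted objective over feasible (z, x) is the reachable weight
    IsGreatest {val : ℝ | ∃ z x, Feas z x ∧ val = ∑ v with v ≠ s, w v * z v}
      (∑ v with v ≠ s ∧ ReachF v, w v) := by
  intro ReachF Feas
  refine ⟨fun z => ⟨?_, ?_⟩, ?_, ?_⟩
  · rintro ⟨x, hfeas, hone⟩
    refine ⟨⟨x, hfeas⟩, fun k hk => ?_⟩
    split_ifs with hr
    exacts [hone k hk hr, FlowNetwork.IsFeasible.eq_zero_of_not_reach hfeas hr]
  · rintro ⟨⟨x, hfeas⟩, hind⟩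
    exact ⟨x, hfeas, fun k hk hr => by rw [hind k hk, if_pos hr]⟩
  · obtain ⟨x, hx⟩ := FlowNetwork.exists_isFeasible_reach_indicator src dst F s
    refine ⟨_, x, hx, ?_⟩
    simp only [mul_ite, mul_one, mul_zero, ← sum_filter, filter_filter]
    rfl
  · rintro _ ⟨z, x, hfeas, rfl⟩
    exact FlowNetwork.IsFeasible.sum_mul_le hfeas hw
end

section
/- For the relaxed MIP of Figure 2 with a single sample, any feasible (z, x, y) with fractional z ∈ [0,1]^{V∖{s}} can be rounded: the vector z* defined by z*_k = 1 if k is reachable from s via edges open under (θ, y) and 0 otherwise is also feasible and achieves objective value at least that of z; hence the LP relaxation in z is tight (the optimum is attained at integral z). -/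
open Finset
open scoped Classical

def Reach {V E : Type} (src dst : E → V) (openE : E → Prop) (s v : V) : Prop :=
  Relation.ReflTransGen (fun u v => ∃ e, openE e ∧ src e = u ∧ dst e = v) s v

/-!
The rounded flow sends one unit along a simple open path from `s` to every vertex reachable
from `s`; an edge then carries at most `|V| - 1` units, and only if it is open.
Conversely, a feasible fractional flow cannot reach the set `U` of unreachable vertices: every
edge entering `U` is closed, so has capacity `0`, and summing conservation over `U` gives
`∑_{u ∈ U} z u ≤ 0`. Hence `z ≤ z*` off `s`, and `w ≥ 0` gives the objective inequality.
-/

theorem List.exists_nodup_isChain_cons_of_relationReflTransGen {α : Type*} {r : α → α → Prop}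
    {a b : α} (h : Relation.ReflTransGen r a b) :
    ∃ l, IsChain r (a :: l) ∧ getLast (a :: l) (cons_ne_nil _ _) = b ∧ (a :: l).Nodup := by
  induction h using Relation.ReflTransGen.head_induction_on with
  | refl => exact ⟨[], .singleton _, rfl, nodup_singleton _⟩
  | @head a c hac _ ih =>
    obtain ⟨l, hchain, hlast, hnodup⟩ := ih
    by_cases ha : a ∈ c :: l
    · -- the walk returns to `a`: cut off the cycle
      obtain ⟨p, q, hpq⟩ := append_of_mem ha
      rw [hpq] at hchain hnodup
      refine ⟨q, hchain.right_of_append, ?_, hnodup.sublist (sublist_append_right _ _)⟩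
      simpa [hpq] using hlast
    · exact ⟨c :: l, .cons_cons hac hchain, by rwa [getLast_cons_cons], nodup_cons.mpr ⟨ha, hnodup⟩⟩

section NetInflow

variable {V E : Type} [Fintype E] (src dst : E → V)

noncomputable def netInflow : (E → ℝ) →ₗ[ℝ] V → ℝ where
  toFun f r := (∑ e with dst e = r, f e) - ∑ e with src e = r, f e
  map_add' f g := by ext r; simp only [Pi.add_apply, sum_add_distrib]; ring
  map_smul' a f := by ext r; simp [mul_sum, mul_sub]

theorem netInflow_apply (f : E → ℝ) (r : V) :
    netInflow src dst f r = (∑ e with dst e = r, f e) - ∑ e with src e = r, f e := rfl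

theorem netInflow_single (e : E) :
    netInflow src dst (Pi.single e 1) = Pi.single (dst e) 1 - Pi.single (src e) 1 := by
  ext r
  simp [netInflow_apply, Pi.single_apply, eq_comm]

theorem sum_netInflow (U : Finset V) (f : E → ℝ) :
    ∑ r ∈ U, netInflow src dst f r
      = ∑ e, ((if dst e ∈ U then f e else 0) - if src e ∈ U then f e else 0) := by
  simp only [netInflow_apply, sum_sub_distrib, sum_filter]
  rw [sum_comm, sum_comm (s := U)]
  simp [sum_ite_eq]

theorem sum_netInflow_nonpos {U : Finset V} {f : E → ℝ} (hf : ∀ e, 0 ≤ f e)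
    (hin : ∀ e, dst e ∈ U → src e ∉ U → f e = 0) : ∑ r ∈ U, netInflow src dst f r ≤ 0 := by
  rw [sum_netInflow]
  refine sum_nonpos fun e _ => ?_
  by_cases hd : dst e ∈ U <;> by_cases hs : src e ∈ U <;> simp [hd, hs, hin e, hf e]

end NetInflow

section Reach

variable {V E : Type} [Fintype E] (src dst : E → V) (openE : E → Prop)

theorem exists_netInflow_eq_of_isChain (l : List V) (s : V)
    (hchain : (s :: l).IsChain fun u v => ∃ e, openE e ∧ src e = u ∧ dst e = v)
    (hnodup : (s :: l).Nodup) :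
    ∃ F : Finset E, (∀ e ∈ F, openE e ∧ dst e ∈ l) ∧
      netInflow src dst (∑ e ∈ F, Pi.single e 1)
        = Pi.single ((s :: l).getLast (List.cons_ne_nil _ _)) 1 - Pi.single s 1 := by
  induction l generalizing s with
  | nil => exact ⟨∅, by simp, by simp⟩
  | cons b t ih =>
    obtain ⟨⟨e₀, he₀, rfl, rfl⟩, hrest⟩ := List.isChain_cons_cons.mp hchain
    obtain ⟨F, hF, hflow⟩ := ih _ hrest hnodup.of_cons
    have he₀F : e₀ ∉ F := fun he => (List.nodup_cons.mp hnodup.of_cons).1 (hF e₀ he).2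
    refine ⟨insert e₀ F, ?_, ?_⟩
    · simp only [mem_insert, forall_eq_or_imp, List.mem_cons, true_or, and_true, he₀, true_and]
      exact fun e he => ⟨(hF e he).1, Or.inr (hF e he).2⟩
    · rw [sum_insert he₀F, map_add, hflow, netInflow_single, List.getLast_cons_cons]
      abel

theorem exists_netInflow_eq_of_reach {s v : V} (h : Reach src dst openE s v) :
    ∃ F : Finset E, (∀ e ∈ F, openE e) ∧
      netInflow src dst (∑ e ∈ F, Pi.single e 1) = Pi.single v 1 - Pi.single s 1 := by
  obtain ⟨l, hchain, rfl, hnodup⟩ := List.exists_nodup_isChain_cons_of_relationReflTransGen h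
  obtain ⟨F, hF, hflow⟩ := exists_netInflow_eq_of_isChain src dst openE l s hchain hnodup
  exact ⟨F, fun e he => (hF e he).1, hflow⟩

theorem exists_flow_to_reachable [Fintype V] (s : V) :
    ∃ x : E → ℝ, (∀ e, 0 ≤ x e) ∧ (∀ e, x e ≤ (Fintype.card V : ℝ) - 1) ∧
      (∀ e, ¬ openE e → x e = 0) ∧
      (∀ r, r ≠ s → netInflow src dst x r = if Reach src dst openE s r then 1 else 0) ∧
      netInflow src dst x s = -∑ v with v ≠ s, if Reach src dst openE s v then 1 else 0 := by
  set R : Finset V := {v | v ≠ s ∧ Reach src dst openE s v}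
  choose! F hFopen hFflow using fun v (hv : v ∈ R) =>
    exists_netInflow_eq_of_reach src dst openE (mem_filter.mp hv).2.2
  have hR : #R + 1 ≤ Fintype.card V := card_lt_univ_of_notMem (s := R) (x := s) (by simp [R])
  have hx (e : E) : (∑ v ∈ R, ∑ e' ∈ F v, Pi.single e' (1 : ℝ)) e
      = ∑ v ∈ R, if e ∈ F v then 1 else 0 := by
    simp [Finset.sum_apply, Pi.single_apply]
  have hflow : netInflow src dst (∑ v ∈ R, ∑ e' ∈ F v, Pi.single e' 1)
      = ∑ v ∈ R, (Pi.single v 1 - Pi.single s 1) := by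
    rw [map_sum]; exact sum_congr rfl hFflow
  refine ⟨∑ v ∈ R, ∑ e' ∈ F v, Pi.single e' 1, fun e => ?_, fun e => ?_, fun e he => ?_, ?_, ?_⟩
  · rw [hx]; positivity
  · calc _ ≤ ∑ v ∈ R, (1 : ℝ) := by rw [hx]; gcongr; split_ifs <;> norm_num
      _ ≤ _ := by
        rw [sum_const, nsmul_one, le_sub_iff_add_le]; exact_mod_cast hR
  · rw [hx]; exact sum_eq_zero fun v hv => if_neg fun heF => he (hFopen v hv e heF)
  · intro r hr
    simp [hflow, Pi.single_apply, hr, R]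
  · simp [hflow, Pi.single_apply, R, filter_filter]

theorem eq_zero_of_not_reach [Fintype V] {s v : V} {x : E → ℝ} {z : V → ℝ} (hx0 : ∀ e, 0 ≤ x e)
    (hclosed : ∀ e, ¬ openE e → x e = 0) (hz : ∀ r, r ≠ s → 0 ≤ z r)
    (hflow : ∀ r, r ≠ s → netInflow src dst x r = z r) (hv : ¬ Reach src dst openE s v) :
    z v = 0 := by
  set U : Finset V := {u | ¬ Reach src dst openE s u}
  have hUs (r : V) (hr : r ∈ U) : r ≠ s := by
    rintro rfl; exact (mem_filter.mp hr).2 .refl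
  -- no edge enters the unreachable set `U` openly, so no flow enters it
  have hcut : ∑ r ∈ U, z r ≤ 0 := by
    rw [← sum_congr rfl fun r hr => hflow r (hUs r hr)]
    refine sum_netInflow_nonpos src dst hx0 fun e hd hs => hclosed e fun he => ?_
    have hs : Reach src dst openE s (src e) := by simpa [U] using hs
    exact (mem_filter.mp hd).2 (hs.tail ⟨e, he, rfl, rfl⟩)
  have hvU : v ∈ U := by simpa [U] using hv
  have := single_le_sum (fun r hr => hz r (hUs r hr)) hvU
  linarith [hz v (hUs v hvU)]

end Reach

section Protection

variable {E : Type} [DecidableEq E] {𝓔 : Finset (Finset E)} {y : Finset E → Bool}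
  {θ : E → Bool} {e : E}

theorem one_le_openCount (h : θ e = true ∨ ∃ Es ∈ 𝓔, y Es = true ∧ e ∈ Es) :
    1 ≤ (∑ Es ∈ 𝓔 with e ∈ Es, if y Es then (1 : ℝ) else 0) + if θ e then 1 else 0 := by
  have hsum : 0 ≤ ∑ Es ∈ 𝓔 with e ∈ Es, if y Es then (1 : ℝ) else 0 := by positivity
  rcases h with hθ | ⟨Es, hEs, hy, he⟩
  · simp only [hθ, if_true]; linarith
  · have := single_le_sum (f := fun Es => if y Es then (1 : ℝ) else 0) (by intros; positivity)
      (by simpa using ⟨hEs, he⟩ : Es ∈ 𝓔.filter (e ∈ ·))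
    simp only [hy, if_true] at this
    have : (0 : ℝ) ≤ if θ e then 1 else 0 := by positivity
    linarith

theorem openCount_eq_zero (h : ¬ (θ e = true ∨ ∃ Es ∈ 𝓔, y Es = true ∧ e ∈ Es)) :
    (∑ Es ∈ 𝓔 with e ∈ Es, if y Es then (1 : ℝ) else 0) + (if θ e then 1 else 0) = 0 := by
  obtain ⟨hθ, hy⟩ := not_or.mp h
  rw [if_neg hθ, add_zero]
  exact sum_eq_zero fun Es hEs => if_neg fun hyEs => hy ⟨Es, (mem_filter.mp hEs).1, hyEs, (mem_filter.mp hEs).2⟩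

end Protection

theorem stmt17_general {V E : Type} [Fintype V] [Fintype E] [DecidableEq E]
    (src dst : E → V) (s : V) (θ : E → Bool) (w : V → ℝ) (hw : ∀ v, 0 ≤ w v)
    (𝓔 : Finset (Finset E))
    (y : Finset E → Bool)
    (z : V → ℝ) (x : E → ℝ)
    (hz : ∀ v, v ≠ s → 0 ≤ z v ∧ z v ≤ 1)
    (hx0 : ∀ e, 0 ≤ x e)
    (hxcap : ∀ e, x e ≤ ((Fintype.card V : ℝ) - 1) *
      ((∑ Es ∈ 𝓔 with e ∈ Es, (if y Es then (1 : ℝ) else 0)) + (if θ e then 1 else 0)))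
    (hflowr : ∀ r, r ≠ s → (∑ e with dst e = r, x e) - (∑ e with src e = r, x e) = z r) :
    -- an edge is open if present in the sample or protected by a selected action
    let openE : E → Prop := fun e => θ e = true ∨ ∃ Es ∈ 𝓔, y Es = true ∧ e ∈ Es
    let zstar : V → ℝ := fun v => if Reach src dst openE s v then 1 else 0
    ∃ xstar : E → ℝ,
      (∀ v, v ≠ s → 0 ≤ zstar v ∧ zstar v ≤ 1) ∧
      (∀ e, 0 ≤ xstar e) ∧
      (∀ e, xstar e ≤ (Fintype.card V : ℝ) - 1) ∧
      (∀ e, xstar e ≤ ((Fintype.card V : ℝ) - 1) *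
        ((∑ Es ∈ 𝓔 with e ∈ Es, (if y Es then (1 : ℝ) else 0)) + (if θ e then 1 else 0))) ∧
      ((∑ e with src e = s, xstar e) - (∑ e with dst e = s, xstar e)
        = ∑ v with v ≠ s, zstar v) ∧
      (∀ r, r ≠ s → (∑ e with dst e = r, xstar e) - (∑ e with src e = r, xstar e) = zstar r) ∧
      (∑ v with v ≠ s, w v * z v) ≤ ∑ v with v ≠ s, w v * zstar v := by
  intro openE zstar
  obtain ⟨xstar, hxs0, hxs1, hxsclosed, hxsflowr, hxsflows⟩ := exists_flow_to_reachable src dst openE s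
  have hclosed (e : E) (he : ¬ openE e) : x e = 0 := by
    have := hxcap e
    rw [openCount_eq_zero he, mul_zero] at this
    exact le_antisymm this (hx0 e)
  refine ⟨xstar, fun v _ => ?_, hxs0, hxs1, fun e => ?_, ?_, hxsflowr, ?_⟩
  · unfold zstar; split_ifs <;> norm_num
  · by_cases he : openE e
    · calc xstar e ≤ (Fintype.card V : ℝ) - 1 := hxs1 e
        _ ≤ _ := le_mul_of_one_le_right (by linarith [hxs0 e, hxs1 e]) (one_le_openCount he)
    · rw [hxsclosed e he, openCount_eq_zero he, mul_zero]
  · rw [netInflow_apply] at hxsflows; linarith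
  · refine sum_le_sum fun v hv => mul_le_mul_of_nonneg_left ?_ (hw v)
    have hvs : v ≠ s := (mem_filter.mp hv).2
    by_cases hr : Reach src dst openE s v
    · simpa [zstar, hr] using (hz v hvs).2
    · simp [zstar, hr, eq_zero_of_not_reach src dst openE hx0 hclosed (fun r hr => (hz r hr).1)
        hflowr hr]

theorem stmt17 {V E : Type} [Fintype V] [Fintype E] [DecidableEq E]
    (src dst : E → V) (s : V) (θ : E → Bool) (w : V → ℝ) (hw : ∀ v, 0 ≤ w v)
    (𝓔 : Finset (Finset E)) (c : Finset E → ℝ) (B : ℝ)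
    (y : Finset E → Bool) (hy : (∑ Es ∈ 𝓔 with y Es = true, c Es) ≤ B)
    (z : V → ℝ) (x : E → ℝ)
    (hz : ∀ v, v ≠ s → 0 ≤ z v ∧ z v ≤ 1)
    (hx0 : ∀ e, 0 ≤ x e)
    (hx1 : ∀ e, x e ≤ (Fintype.card V : ℝ) - 1)
    (hxcap : ∀ e, x e ≤ ((Fintype.card V : ℝ) - 1) *
      ((∑ Es ∈ 𝓔 with e ∈ Es, (if y Es then (1 : ℝ) else 0)) + (if θ e then 1 else 0)))
    (hflows : (∑ e with src e = s, x e) - (∑ e with dst e = s, x e) = ∑ v with v ≠ s, z v)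
    (hflowr : ∀ r, r ≠ s → (∑ e with dst e = r, x e) - (∑ e with src e = r, x e) = z r) :
    -- an edge is open if present in the sample or protected by a selected action
    let openE : E → Prop := fun e => θ e = true ∨ ∃ Es ∈ 𝓔, y Es = true ∧ e ∈ Es
    let zstar : V → ℝ := fun v => if Reach src dst openE s v then 1 else 0
    ∃ xstar : E → ℝ,
      (∀ v, v ≠ s → 0 ≤ zstar v ∧ zstar v ≤ 1) ∧
      (∀ e, 0 ≤ xstar e) ∧
      (∀ e, xstar e ≤ (Fintype.card V : ℝ) - 1) ∧
      (∀ e, xstar e ≤ ((Fintype.card V : ℝ) - 1) *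
        ((∑ Es ∈ 𝓔 with e ∈ Es, (if y Es then (1 : ℝ) else 0)) + (if θ e then 1 else 0))) ∧
      ((∑ e with src e = s, xstar e) - (∑ e with dst e = s, xstar e)
        = ∑ v with v ≠ s, zstar v) ∧
      (∀ r, r ≠ s → (∑ e with dst e = r, xstar e) - (∑ e with src e = r, xstar e) = zstar r) ∧
      (∑ v with v ≠ s, w v * z v) ≤ ∑ v with v ≠ s, w v * zstar v :=
  stmt17_general src dst s θ w hw 𝓔 y z x hz hx0 hxcap hflowr
end
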